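/- arXiv:math/0603347 — 4 statements merged into one kernel-verified Lean document; each statement's English description precedes it below -/
import Mathlib

section
/- Let A = ℤ[h,t][X]/(X² − hX − t) and let ε: A → ℤ[h,t] be the ℤ[h,t]-linear counit determined by ε(1) = 0 and ε(X) = 1. Then for every natural number g: ε((2X − h)^g) = 0 if g is even, and ε((2X − h)^g) = 2·(4t + h²)^((g−1)/2) if g is odd. -/
open Polynomial AdjoinRoot

noncomputable section

/-- The ground ring `R = ℤ[h,t]`. -/
abbrev Rht : Type := MvPolynomial (Fin 2) ℤ

/-- The variable `h`. -/
def hv : Rht := MvPolynomial.X 0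

/-- The variable `t`. -/
def tv : Rht := MvPolynomial.X 1

/-- Khovanov's universal Frobenius algebra `A = R[X]/(X² − hX − t)`. -/
abbrev Aht := AdjoinRoot ((X : Polynomial Rht) ^ 2 - C hv * X - C tv)

lemma ofmk (s : Rht) :
    of ((X : Polynomial Rht) ^ 2 - C hv * X - C tv) s
      = mk ((X : Polynomial Rht) ^ 2 - C hv * X - C tv) (C s) := rfl

lemma of_smul_one (s : Rht) :
    of ((X : Polynomial Rht) ^ 2 - C hv * X - C tv) s = s • (1 : Aht) := by
  rw [← AdjoinRoot.algebraMap_eq, Algebra.algebraMap_eq_smul_one]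

lemma Hmk :
    (2 * root ((X : Polynomial Rht) ^ 2 - C hv * X - C tv) - of _ hv : Aht)
      = mk ((X : Polynomial Rht) ^ 2 - C hv * X - C tv) (2 * X - C hv) := by
  rw [map_sub, map_mul, mk_X, ofmk, map_ofNat]

lemma Hsq :
    ((2 * root ((X : Polynomial Rht) ^ 2 - C hv * X - C tv) - of _ hv) ^ 2 : Aht)
      = of _ (4 * tv + hv ^ 2) := by
  have key : ((2 * X - C hv) ^ 2 : Polynomial Rht)
      = 4 * ((X : Polynomial Rht) ^ 2 - C hv * X - C tv) + C (4 * tv + hv ^ 2) := by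
    simp only [map_add, map_mul, map_pow, map_ofNat]
    ring
  rw [Hmk, ← map_pow, key, map_add, map_mul, mk_self, mul_zero, zero_add, ofmk]

/-- Closed genus-`g` surfaces evaluate to `ε((2X−h)^g)`: zero for even `g` and
`2·(4t+h²)^((g−1)/2)` for odd `g`. -/
theorem closed_surface_evaluation
    (ε : Aht →ₗ[Rht] Rht) (hε1 : ε 1 = 0) (hεX : ε (root _) = 1) (g : ℕ) :
    (Even g → ε ((2 * root _ - of _ hv) ^ g) = 0) ∧
    (Odd g → ε ((2 * root _ - of _ hv) ^ g) =
        2 * (4 * tv + hv ^ 2) ^ ((g - 1) / 2)) := by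
  set H : Aht := 2 * root _ - of _ hv with hH
  have hεH : ε H = 2 := by
    have h2 : (2 : Aht) * root _ = (2 : Rht) • root _ := by
      rw [Algebra.smul_def, map_ofNat]
    rw [hH, h2, of_smul_one, map_sub, map_smul, map_smul, hεX, hε1]
    simp
  have heven : ∀ k : ℕ, H ^ (2 * k) = ((4 * tv + hv ^ 2) ^ k) • (1 : Aht) := by
    intro k
    rw [pow_mul, Hsq, ← map_pow, of_smul_one]
  constructor
  · rintro ⟨k, rfl⟩
    have : k + k = 2 * k := by ring
    rw [this, heven, map_smul, hε1, smul_zero]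
  · rintro ⟨k, rfl⟩
    have h1 : H ^ (2 * k + 1) = ((4 * tv + hv ^ 2) ^ k) • H := by
      rw [pow_succ, heven, smul_mul_assoc, one_mul]
    have h2 : (2 * k + 1 - 1) / 2 = k := by omega
    rw [h1, h2, map_smul, hεH, smul_eq_mul, mul_comm]

end
end

section
/- Let R = ℤ[h,t], A = R[X]/(X² − hX − t), with multiplication m: A ⊗_R A → A the ring multiplication and Δ: A → A ⊗_R A as above (Δ(1) = 1⊗X + X⊗1 − h·1⊗1, Δ(X) = X⊗X + t·1⊗1). Then the Frobenius condition holds: Δ ∘ m = (m ⊗ id) ∘ (id ⊗ Δ) = (id ⊗ m) ∘ (Δ ⊗ id) as maps A ⊗_R A → A ⊗_R A. -/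
open Polynomial AdjoinRoot TensorProduct

noncomputable section

/-- The multiplication of `A`, as an `R`-linear map `A ⊗ A → A`. -/
abbrev mht : Aht ⊗[Rht] Aht →ₗ[Rht] Aht := LinearMap.mul' Rht Aht


lemma fht_monic : ((X : Polynomial Rht) ^ 2 - C hv * X - C tv).Monic := by
  monicity!

lemma fht_natDegree : ((X : Polynomial Rht) ^ 2 - C hv * X - C tv).natDegree = 2 := by
  compute_degree!

lemma root_sq : (root ((X : Polynomial Rht) ^ 2 - C hv * X - C tv)) *
    (root ((X : Polynomial Rht) ^ 2 - C hv * X - C tv))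
    = hv • root _ + tv • (1 : Aht) := by
  have h := AdjoinRoot.mk_self (f := (X : Polynomial Rht) ^ 2 - C hv * X - C tv)
  simp only [map_sub, map_mul, map_pow, AdjoinRoot.mk_X, AdjoinRoot.mk_C, sub_eq_zero] at h
  rw [Algebra.smul_def, Algebra.smul_def, AdjoinRoot.algebraMap_eq]
  linear_combination h

lemma ext_AA (F G : Aht ⊗[Rht] Aht →ₗ[Rht] Aht ⊗[Rht] Aht)
    (h11 : F ((1:Aht) ⊗ₜ[Rht] (1:Aht)) = G ((1:Aht) ⊗ₜ[Rht] (1:Aht)))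
    (h1r : F ((1:Aht) ⊗ₜ[Rht] root _) = G ((1:Aht) ⊗ₜ[Rht] root _))
    (hr1 : F (root _ ⊗ₜ[Rht] (1:Aht)) = G (root _ ⊗ₜ[Rht] (1:Aht)))
    (hrr : F (root _ ⊗ₜ[Rht] root _) = G (root _ ⊗ₜ[Rht] root _)) : F = G := by
  set pb := AdjoinRoot.powerBasis' fht_monic with hpb
  have hdim : pb.dim = 2 := fht_natDegree
  have hgen : pb.gen = root _ := rfl
  apply (pb.basis.tensorProduct pb.basis).ext
  rintro ⟨i, j⟩
  simp only [Module.Basis.tensorProduct_apply, PowerBasis.coe_basis, hgen]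
  have hi : (i : ℕ) = 0 ∨ (i : ℕ) = 1 := by have := i.2; omega
  have hj : (j : ℕ) = 0 ∨ (j : ℕ) = 1 := by have := j.2; omega
  rcases hi with hi | hi <;> rcases hj with hj | hj <;>
    simp [hi, hj, h11, h1r, hr1, hrr]

set_option maxHeartbeats 1000000 in

/-- The Frobenius condition for `F_ht`:
`Δ ∘ m = (m ⊗ id) ∘ (id ⊗ Δ) = (id ⊗ m) ∘ (Δ ⊗ id)`. -/
theorem frobenius_condition
    (Δ : Aht →ₗ[Rht] Aht ⊗[Rht] Aht)
    (hΔ1 : Δ 1 = (1 : Aht) ⊗ₜ[Rht] root _ + root _ ⊗ₜ[Rht] (1 : Aht)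
        - hv • ((1 : Aht) ⊗ₜ[Rht] (1 : Aht)))
    (hΔX : Δ (root _) = root _ ⊗ₜ[Rht] root _
        + tv • ((1 : Aht) ⊗ₜ[Rht] (1 : Aht))) :
    (Δ ∘ₗ mht =
      TensorProduct.map mht LinearMap.id ∘ₗ
        (TensorProduct.assoc Rht Aht Aht Aht).symm.toLinearMap ∘ₗ
        TensorProduct.map LinearMap.id Δ) ∧
    (Δ ∘ₗ mht =
      TensorProduct.map LinearMap.id mht ∘ₗ
        (TensorProduct.assoc Rht Aht Aht Aht).toLinearMap ∘ₗ
        TensorProduct.map Δ LinearMap.id) := by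
  have hr2 := root_sq
  constructor <;>
  · apply ext_AA <;>
    · simp only [LinearMap.comp_apply, LinearEquiv.coe_coe, TensorProduct.map_tmul,
        LinearMap.id_apply, LinearMap.mul'_apply, one_mul, mul_one,
        hΔ1, hΔX, hr2, TensorProduct.tmul_add, TensorProduct.add_tmul,
        TensorProduct.tmul_sub, TensorProduct.sub_tmul,
        TensorProduct.tmul_smul, TensorProduct.smul_tmul', smul_mul_assoc, mul_smul_comm,
        TensorProduct.assoc_tmul, TensorProduct.assoc_symm_tmul,
        map_add, map_sub, map_smul, smul_add, smul_sub]
      try simp only [← TensorProduct.smul_tmul', TensorProduct.tmul_smul]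
      try module


end
end

section
/- Let R = ℤ[H] and A = R[X]/(X² − HX). Define Δ₁: A → A ⊗_R A by Δ₁(1) = 1⊗X + X⊗1 − H·(1⊗1) and Δ₁(X) = X⊗X, and let m₁: A ⊗_R A → A be the ring multiplication (so m₁(X⊗X) = HX). Then (A, m₁, Δ₁, unit 1, counit ε with ε(1)=0, ε(X)=1) satisfies all Frobenius algebra axioms: coassociativity of Δ₁, the counit law, and Δ₁ ∘ m₁ = (m₁ ⊗ id) ∘ (id ⊗ Δ₁). -/
open Polynomial AdjoinRoot TensorProduct

noncomputable section

/-- The ground ring `R = ℤ[H]`. -/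
abbrev RH : Type := Polynomial ℤ

/-- The variable `H`. -/
def Hv : RH := Polynomial.X

/-- The Frobenius algebra `A = ℤ[H][X]/(X² − HX)`. -/
abbrev AH := AdjoinRoot ((X : Polynomial RH) ^ 2 - C Hv * X)

/-- The multiplication of `A`, as an `R`-linear map `A ⊗ A → A`. -/
abbrev mH : AH ⊗[RH] AH →ₗ[RH] AH := LinearMap.mul' RH AH

set_option linter.unnecessarySeqFocus false
set_option maxHeartbeats 1000000

lemma fH_monic : ((X : Polynomial RH) ^ 2 - C Hv * X).Monic := by
  monicity!

lemma fH_natDegree : ((X : Polynomial RH) ^ 2 - C Hv * X).natDegree = 2 := by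
  compute_degree!

def pbH : PowerBasis RH AH := AdjoinRoot.powerBasis' fH_monic

lemma rH_sq : root ((X : Polynomial RH) ^ 2 - C Hv * X) * root _ =
    Hv • root _ := by
  have h := AdjoinRoot.eval₂_root ((X : Polynomial RH) ^ 2 - C Hv * X)
  simp [eval₂_sub, eval₂_mul, eval₂_pow, sub_eq_zero, pow_two, Algebra.smul_def] at h ⊢
  exact h

lemma AH_ext {M : Type} [AddCommMonoid M] [Module RH M] {f g : AH →ₗ[RH] M}
    (h1 : f 1 = g 1) (hX : f (root _) = g (root _)) : f = g := by
  apply pbH.basis.ext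
  intro i
  have hi : (i : ℕ) < 2 := by simpa [pbH, fH_natDegree] using i.2
  rw [pbH.basis_eq_pow]
  interval_cases h : (i : ℕ) <;> simp_all [pbH]

lemma AH2_ext {M : Type} [AddCommMonoid M] [Module RH M]
    {f g : AH ⊗[RH] AH →ₗ[RH] M}
    (h11 : f (1 ⊗ₜ 1) = g (1 ⊗ₜ 1))
    (h1X : f (1 ⊗ₜ root _) = g (1 ⊗ₜ root _))
    (hX1 : f (root _ ⊗ₜ 1) = g (root _ ⊗ₜ 1))
    (hXX : f (root _ ⊗ₜ root _) = g (root _ ⊗ₜ root _)) : f = g := by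
  apply TensorProduct.ext
  apply AH_ext <;> apply AH_ext <;>
    simpa using by assumption

/-- `(A, m₁, Δ₁, 1, ε)` satisfies all the Frobenius algebra axioms:
coassociativity, the counit law, and the Frobenius condition. -/
theorem FH_frobenius_axioms
    (ε : AH →ₗ[RH] RH) (hε1 : ε 1 = 0) (hεX : ε (root _) = 1)
    (Δ : AH →ₗ[RH] AH ⊗[RH] AH)
    (hΔ1 : Δ 1 = (1 : AH) ⊗ₜ[RH] root _ + root _ ⊗ₜ[RH] (1 : AH)
        - Hv • ((1 : AH) ⊗ₜ[RH] (1 : AH)))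
    (hΔX : Δ (root _) = root _ ⊗ₜ[RH] root _) :
    ((TensorProduct.assoc RH AH AH AH).toLinearMap ∘ₗ
        TensorProduct.map Δ LinearMap.id ∘ₗ Δ =
      TensorProduct.map LinearMap.id Δ ∘ₗ Δ) ∧
    ((TensorProduct.lid RH AH).toLinearMap ∘ₗ
        TensorProduct.map ε LinearMap.id ∘ₗ Δ = LinearMap.id) ∧
    ((TensorProduct.rid RH AH).toLinearMap ∘ₗ
        TensorProduct.map LinearMap.id ε ∘ₗ Δ = LinearMap.id) ∧
    (Δ ∘ₗ mH =
      TensorProduct.map mH LinearMap.id ∘ₗ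
        (TensorProduct.assoc RH AH AH AH).symm.toLinearMap ∘ₗ
        TensorProduct.map LinearMap.id Δ) := by
  refine ⟨?_, ?_, ?_, ?_⟩
  · apply AH_ext <;>
      simp only [LinearMap.comp_apply, hΔ1, hΔX, map_add, map_sub, map_smul,
        TensorProduct.map_tmul, LinearMap.id_apply, LinearEquiv.coe_coe,
        tmul_add, tmul_sub, tmul_smul, add_tmul, sub_tmul, ← smul_tmul',
        smul_add, smul_sub, assoc_tmul] <;>
      module
  · apply AH_ext <;>
      simp only [LinearMap.comp_apply, hΔ1, hΔX, hε1, hεX, map_add, map_sub, map_smul,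
        TensorProduct.map_tmul, LinearMap.id_apply, LinearEquiv.coe_coe, lid_tmul,
        smul_tmul', smul_eq_mul, one_smul, zero_smul, mul_one] <;>
      simp
  · apply AH_ext <;>
      simp only [LinearMap.comp_apply, hΔ1, hΔX, hε1, hεX, map_add, map_sub, map_smul,
        TensorProduct.map_tmul, LinearMap.id_apply, LinearEquiv.coe_coe, rid_tmul,
        tmul_smul, smul_eq_mul, one_smul, zero_smul, mul_one] <;>
      simp
  · apply AH2_ext <;>
      simp only [LinearMap.comp_apply, LinearMap.mul'_apply, LinearEquiv.coe_coe,
        TensorProduct.map_tmul, LinearMap.id_apply, one_mul, mul_one,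
        hΔ1, hΔX, rH_sq, map_add, map_sub, map_smul,
        tmul_add, tmul_sub, tmul_smul, add_tmul, sub_tmul, ← smul_tmul',
        smul_add, smul_sub, assoc_symm_tmul] <;>
      module

end
end

section
/- Let R = ℚ[T] and A = R[X]/(X² − T). Define Δ₂: A → A ⊗_R A by Δ₂(1) = 1⊗X + X⊗1 and Δ₂(X) = X⊗X + T·(1⊗1), and let m₂ be the ring multiplication on A. Then Δ₂ is coassociative and satisfies the Frobenius condition Δ₂ ∘ m₂ = (m₂ ⊗ id) ∘ (id ⊗ Δ₂), with counit ε(1) = 0, ε(X) = 1 satisfying (ε ⊗ id) ∘ Δ₂ = id. -/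
open Polynomial AdjoinRoot TensorProduct

set_option linter.unreachableTactic false
set_option linter.unusedTactic false
set_option maxHeartbeats 1000000

noncomputable section

/-- The ground ring `R = ℚ[T]`. -/
abbrev RT : Type := Polynomial ℚ

/-- The variable `T`. -/
def Tv : RT := Polynomial.X

/-- The generalized Lee Frobenius algebra `A = ℚ[T][X]/(X² − T)`. -/
abbrev AT := AdjoinRoot ((X : Polynomial RT) ^ 2 - C Tv)

/-- The multiplication of `A`, as an `R`-linear map `A ⊗ A → A`. -/
abbrev mT : AT ⊗[RT] AT →ₗ[RT] AT := LinearMap.mul' RT AT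

lemma pT_monic : ((X : Polynomial RT) ^ 2 - C Tv).Monic := by
  apply Polynomial.monic_X_pow_sub_C
  norm_num

lemma pT_natDegree : ((X : Polynomial RT) ^ 2 - C Tv).natDegree = 2 := by
  rw [Polynomial.natDegree_X_pow_sub_C]

lemma root_sq_s18 : (root ((X : Polynomial RT) ^ 2 - C Tv)) *
    root ((X : Polynomial RT) ^ 2 - C Tv) = Tv • (1 : AT) := by
  have h := AdjoinRoot.mk_self (f := (X : Polynomial RT) ^ 2 - C Tv)
  rw [map_sub, map_pow, AdjoinRoot.mk_X, sub_eq_zero] at h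
  rw [← pow_two, h, AdjoinRoot.mk_C, Algebra.smul_def, mul_one]
  rfl

lemma AT_basis_ext {M : Type*} [AddCommMonoid M] [Module RT M]
    (f g : AT →ₗ[RT] M) (h1 : f 1 = g 1)
    (hX : f (root _) = g (root _)) : f = g := by
  set pb := AdjoinRoot.powerBasis' pT_monic with hpb
  apply pb.basis.ext
  intro i
  have hi : (i : ℕ) = 0 ∨ (i : ℕ) = 1 := by
    have h2 : (i : ℕ) < 2 :=
      lt_of_lt_of_eq i.isLt
        (by rw [hpb, AdjoinRoot.powerBasis'_dim, pT_natDegree])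
    omega
  rw [pb.basis_eq_pow]
  rcases hi with hi | hi <;> rw [hi] <;>
    simp only [pow_zero, pow_one, AdjoinRoot.powerBasis'_gen] <;> assumption

lemma AT2_basis_ext {M : Type*} [AddCommMonoid M] [Module RT M]
    (f g : AT ⊗[RT] AT →ₗ[RT] M)
    (h11 : f (1 ⊗ₜ[RT] 1) = g (1 ⊗ₜ[RT] 1))
    (h1X : f ((1:AT) ⊗ₜ[RT] root _) = g ((1:AT) ⊗ₜ[RT] root _))
    (hX1 : f (root _ ⊗ₜ[RT] (1:AT)) = g (root _ ⊗ₜ[RT] (1:AT)))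
    (hXX : f (root _ ⊗ₜ[RT] root _) = g (root _ ⊗ₜ[RT] root _)) : f = g := by
  apply TensorProduct.ext
  apply AT_basis_ext <;> apply AT_basis_ext <;>
    simpa using ‹_›

/-- `Δ₂` is coassociative, satisfies the Frobenius condition with `m₂`, and
`ε` with `ε(1) = 0`, `ε(X) = 1` is a (left) counit for it. -/
theorem FT_frobenius_axioms
    (ε : AT →ₗ[RT] RT) (hε1 : ε 1 = 0) (hεX : ε (root _) = 1)
    (Δ : AT →ₗ[RT] AT ⊗[RT] AT)
    (hΔ1 : Δ 1 = (1 : AT) ⊗ₜ[RT] root _ + root _ ⊗ₜ[RT] (1 : AT))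
    (hΔX : Δ (root _) = root _ ⊗ₜ[RT] root _
        + Tv • ((1 : AT) ⊗ₜ[RT] (1 : AT))) :
    ((TensorProduct.assoc RT AT AT AT).toLinearMap ∘ₗ
        TensorProduct.map Δ LinearMap.id ∘ₗ Δ =
      TensorProduct.map LinearMap.id Δ ∘ₗ Δ) ∧
    (Δ ∘ₗ mT =
      TensorProduct.map mT LinearMap.id ∘ₗ
        (TensorProduct.assoc RT AT AT AT).symm.toLinearMap ∘ₗ
        TensorProduct.map LinearMap.id Δ) ∧
    ((TensorProduct.lid RT AT).toLinearMap ∘ₗ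
        TensorProduct.map ε LinearMap.id ∘ₗ Δ = LinearMap.id) := by
  refine ⟨?_, ?_, ?_⟩
  · apply AT_basis_ext <;>
      (simp only [LinearMap.comp_apply, LinearEquiv.coe_coe, map_add, map_smul,
        hΔ1, hΔX, TensorProduct.map_tmul, LinearMap.id_apply,
        TensorProduct.assoc_tmul, tmul_add, add_tmul, smul_add, tmul_smul,
        ← smul_tmul']) <;> abel
  · apply AT2_basis_ext <;>
      (simp only [LinearMap.comp_apply, LinearEquiv.coe_coe, map_add, map_smul,
        hΔ1, hΔX, TensorProduct.map_tmul, LinearMap.id_apply,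
        LinearMap.mul'_apply, TensorProduct.assoc_symm_tmul, tmul_add, add_tmul,
        smul_add, tmul_smul, ← smul_tmul', mul_one, one_mul, root_sq_s18,
        one_smul]) <;> abel
  · apply AT_basis_ext <;>
      simp only [LinearMap.comp_apply, LinearEquiv.coe_coe, map_add, map_smul,
        hΔ1, hΔX, hε1, hεX, TensorProduct.map_tmul, LinearMap.id_apply,
        TensorProduct.lid_tmul, tmul_add, add_tmul, smul_add, tmul_smul,
        ← smul_tmul', one_smul, zero_smul, zero_tmul, map_zero, add_zero,
        zero_add, smul_zero]

end
end
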